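/- arXiv:2511.01057 — 3 statements merged into one kernel-verified Lean document; each statement's English description precedes it below -/
import Mathlib

section
/- Let P be a real symmetric positive definite n×n matrix, β > 0, and let (Φ_k)_{k∈ℕ} be a sequence of real n×n matrices and (S_k)_{k∈ℕ} a sequence of positive reals. Let x : ℕ → ℝⁿ satisfy x_{k+1} = Φ_k x_k for all k, and suppose the self-triggering condition x_kᵀ (Φ_kᵀ P Φ_k − e^{−β S_k} P) x_k ≤ 0 holds for every k. Then, with τ_k = Σ_{j<k} S_j, one has x_kᵀ P x_k ≤ e^{−β τ_k} · (x₀ᵀ P x₀) for all k ∈ ℕ. -/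
open Matrix

/-- Proposition 1, online self-triggering, perturbation-free case:
If `x_{k+1} = Φ_k x_k` and the self-triggering condition
`x_kᵀ (Φ_kᵀ P Φ_k − e^{−β S_k} P) x_k ≤ 0` holds for every `k`, then the quadratic
Lyapunov function `V(x) = xᵀ P x` satisfies `V(x_k) ≤ e^{−β τ_k} V(x_0)` with
`τ_k = Σ_{j<k} S_j`. -/
theorem stmt0 {n : ℕ} (P : Matrix (Fin n) (Fin n) ℝ) (hP : P.PosDef)
    (β : ℝ) (hβ : 0 < β)
    (Φ : ℕ → Matrix (Fin n) (Fin n) ℝ) (S : ℕ → ℝ) (hS : ∀ k, 0 < S k)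
    (x : ℕ → Fin n → ℝ) (hx : ∀ k, x (k + 1) = Φ k *ᵥ x k)
    (htrig : ∀ k, x k ⬝ᵥ (((Φ k)ᵀ * P * Φ k - Real.exp (-β * S k) • P) *ᵥ x k) ≤ 0) :
    ∀ k, x k ⬝ᵥ (P *ᵥ x k) ≤
      Real.exp (-β * ∑ j ∈ Finset.range k, S j) * (x 0 ⬝ᵥ (P *ᵥ x 0)) := by
  intro k
  induction k with
  | zero => simp
  | succ k ih =>
    have h1 : x (k+1) ⬝ᵥ (P *ᵥ x (k+1)) = x k ⬝ᵥ (((Φ k)ᵀ * P * Φ k) *ᵥ x k) := by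
      rw [hx k, ← mulVec_mulVec, ← mulVec_mulVec, dotProduct_mulVec,
        ← dotProduct_mulVec, dotProduct_mulVec (x k), vecMul_transpose]
    have h2 := htrig k
    rw [sub_mulVec, dotProduct_sub, sub_nonpos, smul_mulVec,
      dotProduct_smul, smul_eq_mul] at h2
    rw [h1, Finset.sum_range_succ]
    calc x k ⬝ᵥ (((Φ k)ᵀ * P * Φ k) *ᵥ x k)
        ≤ Real.exp (-β * S k) * (x k ⬝ᵥ (P *ᵥ x k)) := h2
      _ ≤ Real.exp (-β * S k) *
          (Real.exp (-β * ∑ j ∈ Finset.range k, S j) * (x 0 ⬝ᵥ (P *ᵥ x 0))) := by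
          exact mul_le_mul_of_nonneg_left ih (Real.exp_pos _).le
      _ = Real.exp (-β * (∑ j ∈ Finset.range k, S j + S k)) * (x 0 ⬝ᵥ (P *ᵥ x 0)) := by
          rw [← mul_assoc, ← Real.exp_add]; ring_nf
end

section
/- Let P and M be real symmetric positive definite n×n matrices, Φ a real n×n matrix, and let α ∈ (0,1], γ > 0, χ ≥ 0 be reals with γ ≥ χ · λ_max(P M⁻¹ P + P). Let x, w ∈ ℝⁿ satisfy ‖w‖₂² ≤ χ, xᵀ P x > 1, and the triggering condition xᵀ (Φᵀ (P + M) Φ − (α − γ) P) x ≤ γ − χ · λ_max(P M⁻¹ P + P). Then (Φx + w)ᵀ P (Φx + w) ≤ α · xᵀ P x. -/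
open Matrix

/-- The Euclidean norm on `Fin n → ℝ`. -/
noncomputable def eNorm {n : ℕ} (x : Fin n → ℝ) : ℝ := Real.sqrt (∑ i, x i ^ 2)

/-- The largest eigenvalue of a Hermitian (real symmetric) matrix. -/
noncomputable def lamMax {n : ℕ} {A : Matrix (Fin n) (Fin n) ℝ} (hA : A.IsHermitian) : ℝ :=
  ⨆ i, hA.eigenvalues i

lemma sym_dot {n : ℕ} {A : Matrix (Fin n) (Fin n) ℝ} (hA : A.IsHermitian)
    (u v : Fin n → ℝ) : u ⬝ᵥ (A *ᵥ v) = v ⬝ᵥ (A *ᵥ u) := by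
  rw [dotProduct_mulVec, dotProduct_comm, ← mulVec_transpose]
  have h : Aᵀ = A := by rw [← conjTranspose_eq_transpose_of_trivial]; exact hA
  rw [h]

lemma young {n : ℕ} {M : Matrix (Fin n) (Fin n) ℝ} (hM : M.PosDef)
    (a b : Fin n → ℝ) : 2 * (a ⬝ᵥ b) ≤ a ⬝ᵥ (M *ᵥ a) + b ⬝ᵥ (M⁻¹ *ᵥ b) := by
  have hMb : M *ᵥ (M⁻¹ *ᵥ b) = b := by
    rw [mulVec_mulVec, Matrix.mul_nonsing_inv _ (isUnit_iff_isUnit_det _ |>.1 hM.isUnit),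
      one_mulVec]
  have h0 : 0 ≤ (a - M⁻¹ *ᵥ b) ⬝ᵥ (M *ᵥ (a - M⁻¹ *ᵥ b)) := by
    simpa using hM.posSemidef.re_dotProduct_nonneg (a - M⁻¹ *ᵥ b)
  have hswap : (M⁻¹ *ᵥ b) ⬝ᵥ (M *ᵥ a) = a ⬝ᵥ b := by
    rw [sym_dot hM.isHermitian, hMb]
  rw [mulVec_sub, sub_dotProduct, dotProduct_sub, dotProduct_sub, hMb, hswap] at h0
  rw [dotProduct_comm (M⁻¹ *ᵥ b) b] at h0
  rw [show b ⬝ᵥ M⁻¹ *ᵥ b = (M⁻¹ *ᵥ b) ⬝ᵥ b from dotProduct_comm _ _] at h0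
  linarith [dotProduct_comm b (M⁻¹ *ᵥ b)]

lemma rayleigh {n : ℕ} {A : Matrix (Fin n) (Fin n) ℝ} (hA : A.IsHermitian)
    (lmax : ℝ) (hl : ∀ i, hA.eigenvalues i ≤ lmax) (hl0 : 0 ≤ lmax)
    (w : Fin n → ℝ) : w ⬝ᵥ (A *ᵥ w) ≤ lmax * (w ⬝ᵥ w) := by
  set U : Matrix (Fin n) (Fin n) ℝ := (hA.eigenvectorUnitary : Matrix (Fin n) (Fin n) ℝ) with hU
  have hspec : A = U * diagonal hA.eigenvalues * star U := by
    simpa using hA.spectral_theorem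
  have hUU : U * star U = 1 := by
    simpa [hU] using (unitary.mul_star_self hA.eigenvectorUnitary)
  set v : Fin n → ℝ := (star U) *ᵥ w with hv
  have hAw : w ⬝ᵥ (A *ᵥ w) = ∑ i, hA.eigenvalues i * v i ^ 2 := by
    rw [show A *ᵥ w = (U * diagonal hA.eigenvalues * star U) *ᵥ w from by rw [← hspec]]
    rw [← mulVec_mulVec, ← mulVec_mulVec, dotProduct_mulVec, ← mulVec_transpose]
    have hUT : Uᵀ = star U := by
      simp [star, conjTranspose]
    rw [hUT, ← hv, dotProduct_mulVec v (diagonal hA.eigenvalues)]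
    simp only [dotProduct, vecMul_diagonal, pow_two]
    exact Finset.sum_congr rfl fun i _ => by ring
  have hvv : v ⬝ᵥ v = w ⬝ᵥ w := by
    rw [hv, dotProduct_mulVec, ← mulVec_transpose]
    have hUT : (star U)ᵀ = U := by
      simp [star, conjTranspose]
    rw [hUT, mulVec_mulVec, hUU, one_mulVec]
  rw [hAw, ← hvv]
  calc ∑ i, hA.eigenvalues i * v i ^ 2 ≤ ∑ i, lmax * v i ^ 2 := by
        apply Finset.sum_le_sum
        intro i _
        exact mul_le_mul_of_nonneg_right (hl i) (sq_nonneg _)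
    _ = lmax * (v ⬝ᵥ v) := by
        simp [dotProduct, Finset.mul_sum, pow_two]

lemma dot_shift {n : ℕ} (B : Matrix (Fin n) (Fin n) ℝ) (u v : Fin n → ℝ) :
    (B *ᵥ u) ⬝ᵥ v = u ⬝ᵥ (Bᵀ *ᵥ v) := by
  rw [dotProduct_mulVec, vecMul_transpose]

/-- Case (i) of the proof of Proposition 3, outside the unit ellipsoid:
under the triggering condition, the perturbed step satisfies
`(Φx + w)ᵀ P (Φx + w) ≤ α xᵀ P x`. -/
theorem stmt7 {n : ℕ} (hn : 0 < n) (P M Φ : Matrix (Fin n) (Fin n) ℝ)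
    (hP : P.PosDef) (hM : M.PosDef)
    (α γ χ : ℝ) (hα0 : 0 < α) (hα1 : α ≤ 1) (hγ : 0 < γ) (hχ : 0 ≤ χ)
    (hH : (P * M⁻¹ * P + P).IsHermitian)
    (hγχ : χ * lamMax hH ≤ γ)
    (x w : Fin n → ℝ)
    (hw : eNorm w ^ 2 ≤ χ)
    (hx : 1 < x ⬝ᵥ (P *ᵥ x))
    (htrig : x ⬝ᵥ ((Φᵀ * (P + M) * Φ - (α - γ) • P) *ᵥ x) ≤ γ - χ * lamMax hH) :
    (Φ *ᵥ x + w) ⬝ᵥ (P *ᵥ (Φ *ᵥ x + w)) ≤ α * (x ⬝ᵥ (P *ᵥ x)) := by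
  set a := Φ *ᵥ x with ha
  set b := P *ᵥ w with hb
  set A := P * M⁻¹ * P + P with hA
  -- A is positive semidefinite
  have hApsd : A.PosSemidef := by
    have h1 : (Pᴴ * M⁻¹ * P).PosSemidef := hM.inv.posSemidef.conjTranspose_mul_mul_same P
    rw [hP.isHermitian] at h1
    exact h1.add hP.posSemidef
  -- eigenvalue bounds
  have hbdd : BddAbove (Set.range hH.eigenvalues) := Set.Finite.bddAbove (Set.finite_range _)
  have hle : ∀ i, hH.eigenvalues i ≤ lamMax hH := fun i => le_ciSup hbdd i
  have hl0 : 0 ≤ lamMax hH :=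
    le_trans (hApsd.eigenvalues_nonneg ⟨0, hn⟩) (hle ⟨0, hn⟩)
  -- norm of w
  have hww : w ⬝ᵥ w ≤ χ := by
    have : eNorm w ^ 2 = ∑ i, w i ^ 2 :=
      Real.sq_sqrt (Finset.sum_nonneg fun i _ => sq_nonneg _)
    calc w ⬝ᵥ w = ∑ i, w i ^ 2 := by simp [dotProduct, pow_two]
      _ ≤ χ := by rw [← this]; exact hw
  -- quadratic form bound on w
  have hwA : w ⬝ᵥ (A *ᵥ w) ≤ χ * lamMax hH := by
    calc w ⬝ᵥ (A *ᵥ w) ≤ lamMax hH * (w ⬝ᵥ w) := rayleigh hH _ hle hl0 w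
      _ ≤ lamMax hH * χ := mul_le_mul_of_nonneg_left hww hl0
      _ = χ * lamMax hH := mul_comm _ _
  -- expand the LHS
  have hcross : w ⬝ᵥ (P *ᵥ a) = a ⬝ᵥ b := by
    rw [sym_dot hP.isHermitian]
  have hexp : (a + w) ⬝ᵥ (P *ᵥ (a + w))
      = a ⬝ᵥ (P *ᵥ a) + 2 * (a ⬝ᵥ b) + w ⬝ᵥ (P *ᵥ w) := by
    simp only [mulVec_add, dotProduct_add, add_dotProduct, hcross]
    ring
  -- Young
  have hy : 2 * (a ⬝ᵥ b) ≤ a ⬝ᵥ (M *ᵥ a) + b ⬝ᵥ (M⁻¹ *ᵥ b) := young hM a b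
  -- rewrite b ⬝ᵥ M⁻¹ b
  have hbb : b ⬝ᵥ (M⁻¹ *ᵥ b) = w ⬝ᵥ ((P * M⁻¹ * P) *ᵥ w) := by
    have hPT : Pᵀ = P := by rw [← conjTranspose_eq_transpose_of_trivial]; exact hP.isHermitian
    rw [hb, mulVec_mulVec, dot_shift, mulVec_mulVec, hPT, ← Matrix.mul_assoc]
  -- triggering term
  have htrig' : a ⬝ᵥ ((P + M) *ᵥ a)
      ≤ (α - γ) * (x ⬝ᵥ (P *ᵥ x)) + γ - χ * lamMax hH := by
    have heq : a ⬝ᵥ ((P + M) *ᵥ a) = x ⬝ᵥ ((Φᵀ * (P + M) * Φ) *ᵥ x) := by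
      rw [ha, dot_shift, mulVec_mulVec, mulVec_mulVec, Matrix.mul_assoc]
    have hsub : x ⬝ᵥ ((Φᵀ * (P + M) * Φ - (α - γ) • P) *ᵥ x)
        = x ⬝ᵥ ((Φᵀ * (P + M) * Φ) *ᵥ x) - (α - γ) * (x ⬝ᵥ (P *ᵥ x)) := by
      rw [sub_mulVec, dotProduct_sub, smul_mulVec, dotProduct_smul, smul_eq_mul]
    rw [heq]
    rw [hsub] at htrig
    linarith
  -- combine
  have hAw : w ⬝ᵥ (A *ᵥ w) = w ⬝ᵥ ((P * M⁻¹ * P) *ᵥ w) + w ⬝ᵥ (P *ᵥ w) := by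
    rw [hA, add_mulVec, dotProduct_add]
  have hPMa : a ⬝ᵥ ((P + M) *ᵥ a) = a ⬝ᵥ (P *ᵥ a) + a ⬝ᵥ (M *ᵥ a) := by
    rw [add_mulVec, dotProduct_add]
  have hT : 1 < x ⬝ᵥ (P *ᵥ x) := hx
  have : (a + w) ⬝ᵥ (P *ᵥ (a + w)) ≤ α * (x ⬝ᵥ (P *ᵥ x)) := by
    rw [hexp]
    nlinarith [hwA, hy, hbb, htrig', hAw, hPMa, hT, hγ]
  simpa [ha] using this
end

section
/- Let P, M be real symmetric positive definite n×n matrices, β > 0, γ > 0, χ ≥ 0 with γ ≥ χ · λ_max(P M⁻¹ P + P), and C' ≥ 0, ϖ ≥ 0. Let (Φ_k)_{k∈ℕ} be real n×n matrices, (S_k) positive reals, (w_k) vectors in ℝⁿ with ‖w_k‖₂² ≤ χ for all k, and x : ℕ → ℝⁿ with x_{k+1} = Φ_k x_k + w_k. Suppose for every k: if x_kᵀ P x_k > 1 then x_kᵀ (Φ_kᵀ (P + M) Φ_k − (e^{−β S_k} − γ) P) x_k ≤ γ − χ · λ_max(P M⁻¹ P + P), while if x_kᵀ P x_k ≤ 1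 then ‖Φ_k‖₂ ≤ C' and ‖w_k‖₂ ≤ ϖ. Then with μ = max(1, λ_max(P)·(C'/√(λ_min(P)) + ϖ)²) and τ_k = Σ_{j<k} S_j, one has x_kᵀ P x_k ≤ max(e^{−β τ_k} · x₀ᵀ P x₀, μ) for all k ∈ ℕ. In particular the trajectory is globally uniformly ultimately bounded and ultimately remains in the ellipsoid E(P, μ) = {x : xᵀPx ≤ μ}. -/
open Matrix

/-- The operator norm of a matrix induced by the Euclidean norm. -/
noncomputable def opNorm2 {n : ℕ} (A : Matrix (Fin n) (Fin n) ℝ) : ℝ :=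
  ‖LinearMap.toContinuousLinearMap (Matrix.toEuclideanLin A)‖

/-- The smallest eigenvalue of a Hermitian (real symmetric) matrix. -/
noncomputable def lamMin {n : ℕ} {A : Matrix (Fin n) (Fin n) ℝ} (hA : A.IsHermitian) : ℝ :=
  ⨅ i, hA.eigenvalues i

section helpers

variable {n : ℕ}

lemma dotProduct_eq_inner (v u : Fin n → ℝ) :
    v ⬝ᵥ u = @inner ℝ _ _ ((WithLp.equiv 2 (Fin n → ℝ)).symm v)
      ((WithLp.equiv 2 (Fin n → ℝ)).symm u) := by
  simp [dotProduct, PiLp.inner_apply, RCLike.inner_apply, starRingEnd_apply]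
  exact Finset.sum_congr rfl fun i _ => mul_comm _ _

lemma eNorm_eq_norm (v : Fin n → ℝ) : eNorm v = ‖(WithLp.equiv 2 (Fin n → ℝ)).symm v‖ := by
  rw [EuclideanSpace.norm_eq]
  simp [eNorm, Real.norm_eq_abs, sq_abs]

lemma eNorm_nonneg (v : Fin n → ℝ) : 0 ≤ eNorm v := Real.sqrt_nonneg _

lemma eNorm_sq (v : Fin n → ℝ) : eNorm v ^ 2 = ∑ i, v i ^ 2 :=
  Real.sq_sqrt (Finset.sum_nonneg fun _ _ => sq_nonneg _)

lemma eNorm_add_le (a b : Fin n → ℝ) : eNorm (a + b) ≤ eNorm a + eNorm b := by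
  simp only [eNorm_eq_norm]
  exact (norm_add_le _ _).trans_eq' (by congr)

lemma mulVec_eNorm_le (A : Matrix (Fin n) (Fin n) ℝ) (v : Fin n → ℝ) :
    eNorm (A *ᵥ v) ≤ opNorm2 A * eNorm v := by
  simp only [eNorm_eq_norm]
  have h := (LinearMap.toContinuousLinearMap (Matrix.toEuclideanLin A)).le_opNorm
    ((WithLp.equiv 2 (Fin n → ℝ)).symm v)
  rw [LinearMap.coe_toContinuousLinearMap'] at h
  exact h

lemma IsHermitian.transpose_eq' {A : Matrix (Fin n) (Fin n) ℝ} (hA : A.IsHermitian) :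
    Aᵀ = A := by
  ext i j
  have := congrFun (congrFun hA.eq i) j
  simpa [Matrix.conjTranspose_apply] using this

lemma mulVec_dotProduct_eq {A : Matrix (Fin n) (Fin n) ℝ} (hA : Aᵀ = A) (a y : Fin n → ℝ) :
    (A *ᵥ a) ⬝ᵥ y = a ⬝ᵥ (A *ᵥ y) := by
  conv_rhs => rw [dotProduct_mulVec, ← hA, vecMul_transpose]

lemma dot_mulVec_symm {A : Matrix (Fin n) (Fin n) ℝ} (hA : A.IsHermitian) (a b : Fin n → ℝ) :
    a ⬝ᵥ (A *ᵥ b) = b ⬝ᵥ (A *ᵥ a) := by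
  rw [← mulVec_dotProduct_eq (IsHermitian.transpose_eq' hA), dotProduct_comm]

lemma rayleigh_bounds (hn : 0 < n) {A : Matrix (Fin n) (Fin n) ℝ} (hA : A.IsHermitian)
    (v : Fin n → ℝ) :
    lamMin hA * ∑ i, v i ^ 2 ≤ v ⬝ᵥ (A *ᵥ v) ∧
      v ⬝ᵥ (A *ᵥ v) ≤ lamMax hA * ∑ i, v i ^ 2 := by
  haveI : Nonempty (Fin n) := Fin.pos_iff_nonempty.mp hn
  set b := hA.eigenvectorBasis with hb
  set y : EuclideanSpace ℝ (Fin n) := (WithLp.equiv 2 (Fin n → ℝ)).symm v with hy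
  have hbe : ∀ i : Fin n, Matrix.toEuclideanLin A (b i) = hA.eigenvalues i • (b i) := by
    intro i
    have key := hA.mulVec_eigenvectorBasis i
    ext j
    have := congrFun key j
    simpa [Matrix.toEuclideanLin_apply] using this
  have h2 : ∀ i, (inner ℝ (b i) (Matrix.toEuclideanLin A y) : ℝ)
      = hA.eigenvalues i * (inner ℝ (b i) y : ℝ) := by
    intro i
    have hsym := (Matrix.isHermitian_iff_isSymmetric.1 hA)
    rw [← hsym (b i) y, hbe i, real_inner_smul_left]
  have hquad : v ⬝ᵥ (A *ᵥ v) = ∑ i, hA.eigenvalues i * (inner ℝ (b i) y : ℝ) ^ 2 := by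
    have h0 : v ⬝ᵥ (A *ᵥ v) = (inner ℝ y (Matrix.toEuclideanLin A y) : ℝ) := by
      exact dotProduct_eq_inner _ _
    have h1 : (inner ℝ y (Matrix.toEuclideanLin A y) : ℝ)
        = ∑ i, (inner ℝ y (b i) : ℝ) * (inner ℝ (b i) (Matrix.toEuclideanLin A y) : ℝ) :=
      (b.sum_inner_mul_inner y _).symm
    rw [h0, h1]
    refine Finset.sum_congr rfl fun i _ => ?_
    rw [h2 i, real_inner_comm y (b i)]
    ring
  have hnorm : ∑ i, v i ^ 2 = ∑ i, (inner ℝ (b i) y : ℝ) ^ 2 := by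
    have h3 : (inner ℝ y y : ℝ) = ∑ i, (inner ℝ y (b i) : ℝ) * (inner ℝ (b i) y : ℝ) :=
      (b.sum_inner_mul_inner y y).symm
    have h4 : v ⬝ᵥ v = (inner ℝ y y : ℝ) := dotProduct_eq_inner v v
    have h5 : v ⬝ᵥ v = ∑ i, v i ^ 2 := by
      simp [dotProduct, sq]
    rw [← h5, h4, h3]
    refine Finset.sum_congr rfl fun i _ => ?_
    rw [real_inner_comm y (b i)]; ring
  have hbddA : BddAbove (Set.range hA.eigenvalues) := (Set.finite_range _).bddAbove
  have hbddB : BddBelow (Set.range hA.eigenvalues) := (Set.finite_range _).bddBelow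
  constructor
  · rw [hquad, hnorm, Finset.mul_sum]
    exact Finset.sum_le_sum fun i _ =>
      mul_le_mul_of_nonneg_right (ciInf_le hbddB i) (sq_nonneg _)
  · rw [hquad, hnorm, Finset.mul_sum]
    exact Finset.sum_le_sum fun i _ =>
      mul_le_mul_of_nonneg_right (le_ciSup hbddA i) (sq_nonneg _)

end helpers

/-- Proposition 3: online self-triggering, perturbed case:
under the triggering condition outside the unit ellipsoid and the maximal-interval
step inside it, the Lyapunov value satisfies
`x_kᵀ P x_k ≤ max(e^{−β τ_k} x_0ᵀ P x_0, μ)` with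
`μ = max(1, λ_max(P)(C'/√λ_min(P) + ϖ)²)`; in particular the trajectory is GUUB and
ultimately remains in the ellipsoid `E(P, μ)`. -/
theorem stmt10 {n : ℕ} (hn : 0 < n) (P M : Matrix (Fin n) (Fin n) ℝ)
    (hP : P.PosDef) (hM : M.PosDef)
    (β γ χ C' ϖ : ℝ) (hβ : 0 < β) (hγ : 0 < γ) (hχ : 0 ≤ χ) (hC' : 0 ≤ C') (hϖ : 0 ≤ ϖ)
    (hH : (P * M⁻¹ * P + P).IsHermitian)
    (hγχ : χ * lamMax hH ≤ γ)
    (Φ : ℕ → Matrix (Fin n) (Fin n) ℝ) (S : ℕ → ℝ) (hS : ∀ k, 0 < S k)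
    (w : ℕ → Fin n → ℝ) (hw : ∀ k, eNorm (w k) ^ 2 ≤ χ)
    (x : ℕ → Fin n → ℝ) (hx : ∀ k, x (k + 1) = Φ k *ᵥ x k + w k)
    (htrig : ∀ k, 1 < x k ⬝ᵥ (P *ᵥ x k) →
      x k ⬝ᵥ (((Φ k)ᵀ * (P + M) * Φ k - (Real.exp (-β * S k) - γ) • P) *ᵥ x k) ≤
        γ - χ * lamMax hH)
    (hin : ∀ k, x k ⬝ᵥ (P *ᵥ x k) ≤ 1 → opNorm2 (Φ k) ≤ C' ∧ eNorm (w k) ≤ ϖ) :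
    ∀ k, x k ⬝ᵥ (P *ᵥ x k) ≤
      max (Real.exp (-β * ∑ j ∈ Finset.range k, S j) * (x 0 ⬝ᵥ (P *ᵥ x 0)))
        (max 1 (lamMax hP.1 * (C' / Real.sqrt (lamMin hP.1) + ϖ) ^ 2)) := by
  haveI : Nonempty (Fin n) := Fin.pos_iff_nonempty.mp hn
  have hPt : Pᵀ = P := IsHermitian.transpose_eq' hP.1
  set μ₂ := lamMax hP.1 * (C' / Real.sqrt (lamMin hP.1) + ϖ) ^ 2 with hμ₂
  -- basic facts
  have hMdet : IsUnit M.det := isUnit_iff_ne_zero.mpr hM.det_pos.ne'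
  have hHpsd : (P * M⁻¹ * P + P).PosSemidef := by
    have h1 : (P * M⁻¹ * P).PosSemidef := by
      have := (hM.inv.posSemidef).conjTranspose_mul_mul_same P
      rwa [hP.1.eq] at this
    exact h1.add hP.posSemidef
  have hbddH : BddAbove (Set.range hH.eigenvalues) := (Set.finite_range _).bddAbove
  have hlamH : 0 ≤ lamMax hH :=
    le_trans (hHpsd.eigenvalues_nonneg (Classical.arbitrary _)) (le_ciSup hbddH _)
  have hbddP : BddAbove (Set.range hP.1.eigenvalues) := (Set.finite_range _).bddAbove
  have hbddPb : BddBelow (Set.range hP.1.eigenvalues) := (Set.finite_range _).bddBelow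
  have hlamPmin : 0 < lamMin hP.1 := by
    obtain ⟨i, hi⟩ := Finite.exists_min hP.1.eigenvalues
    have h1 : lamMin hP.1 = hP.1.eigenvalues i :=
      le_antisymm (ciInf_le hbddPb i) (le_ciInf hi)
    rw [h1]; exact hP.eigenvalues_pos i
  have hlamPmax : 0 ≤ lamMax hP.1 :=
    le_trans (hP.eigenvalues_pos (Classical.arbitrary _)).le (le_ciSup hbddP _)
  -- step in the triggering case
  have step1 : ∀ k, 1 < x k ⬝ᵥ (P *ᵥ x k) →
      x (k + 1) ⬝ᵥ (P *ᵥ x (k + 1)) ≤ Real.exp (-β * S k) * (x k ⬝ᵥ (P *ᵥ x k)) := by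
    intro k hk
    set u := Φ k *ᵥ x k with hu
    set V := x k ⬝ᵥ (P *ᵥ x k) with hV
    -- Young's inequality
    have hMM : M *ᵥ (M⁻¹ *ᵥ (P *ᵥ w k)) = P *ᵥ w k := by
      rw [mulVec_mulVec, Matrix.mul_nonsing_inv _ hMdet, one_mulVec]
    have young : 2 * (u ⬝ᵥ (P *ᵥ w k)) ≤
        u ⬝ᵥ (M *ᵥ u) + w k ⬝ᵥ ((P * M⁻¹ * P) *ᵥ w k) := by
      set q := M⁻¹ *ᵥ (P *ᵥ w k) with hq
      have h0 : 0 ≤ (u - q) ⬝ᵥ (M *ᵥ (u - q)) := by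
        simpa using hM.posSemidef.dotProduct_mulVec_nonneg (u - q)
      have hcross : q ⬝ᵥ (M *ᵥ u) = u ⬝ᵥ (P *ᵥ w k) := by
        rw [dot_mulVec_symm hM.1, hq, hMM]
      have hcross2 : u ⬝ᵥ (M *ᵥ q) = u ⬝ᵥ (P *ᵥ w k) := by rw [hq, hMM]
      have hquadw : q ⬝ᵥ (M *ᵥ q) = w k ⬝ᵥ ((P * M⁻¹ * P) *ᵥ w k) := by
        rw [hq, hMM, dotProduct_comm, mulVec_dotProduct_eq hPt, mulVec_mulVec,
          mulVec_mulVec]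
      rw [mulVec_sub, dotProduct_sub, sub_dotProduct, sub_dotProduct,
        hcross, hcross2, hquadw] at h0
      linarith
    -- expansion of the next Lyapunov value
    have hVexp : x (k + 1) ⬝ᵥ (P *ᵥ x (k + 1)) =
        u ⬝ᵥ (P *ᵥ u) + 2 * (u ⬝ᵥ (P *ᵥ w k)) + w k ⬝ᵥ (P *ᵥ w k) := by
      rw [hx k, ← hu, mulVec_add, dotProduct_add, add_dotProduct, add_dotProduct,
        dot_mulVec_symm hP.1 (w k) u]
      ring
    -- split of the quadratic form
    have hsplit : x k ⬝ᵥ (((Φ k)ᵀ * (P + M) * Φ k) *ᵥ x k)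
        = u ⬝ᵥ (P *ᵥ u) + u ⬝ᵥ (M *ᵥ u) := by
      rw [mul_assoc, ← mulVec_mulVec, ← mulVec_mulVec, dotProduct_mulVec,
        vecMul_transpose, add_mulVec, dotProduct_add, ← hu]
    -- rearranged triggering condition
    have htrig' : x k ⬝ᵥ (((Φ k)ᵀ * (P + M) * Φ k) *ᵥ x k) ≤
        (Real.exp (-β * S k) - γ) * V + (γ - χ * lamMax hH) := by
      have h := htrig k hk
      rw [sub_mulVec, dotProduct_sub, smul_mulVec, dotProduct_smul,
        smul_eq_mul] at h
      linarith
    -- perturbation quadratic bound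
    have hwH : w k ⬝ᵥ ((P * M⁻¹ * P + P) *ᵥ w k) ≤ χ * lamMax hH := by
      have h1 := (rayleigh_bounds hn hH (w k)).2
      have h2 : ∑ i, w k i ^ 2 ≤ χ := by rw [← eNorm_sq]; exact hw k
      calc w k ⬝ᵥ ((P * M⁻¹ * P + P) *ᵥ w k) ≤ lamMax hH * ∑ i, w k i ^ 2 := h1
        _ ≤ lamMax hH * χ := mul_le_mul_of_nonneg_left h2 hlamH
        _ = χ * lamMax hH := mul_comm _ _
    have hcomb : x (k + 1) ⬝ᵥ (P *ᵥ x (k + 1)) ≤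
        (Real.exp (-β * S k) - γ) * V + γ := by
      have hsum : w k ⬝ᵥ ((P * M⁻¹ * P) *ᵥ w k) + w k ⬝ᵥ (P *ᵥ w k)
          = w k ⬝ᵥ ((P * M⁻¹ * P + P) *ᵥ w k) := by
        rw [add_mulVec, dotProduct_add]
      rw [hVexp]
      have := hsplit ▸ htrig'
      linarith
    have : (Real.exp (-β * S k) - γ) * V + γ ≤ Real.exp (-β * S k) * V := by
      nlinarith [hk]
    linarith [hcomb]
  -- step in the inside case
  have step2 : ∀ k, x k ⬝ᵥ (P *ᵥ x k) ≤ 1 →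
      x (k + 1) ⬝ᵥ (P *ᵥ x (k + 1)) ≤ μ₂ := by
    intro k hk
    obtain ⟨hΦ, hwk⟩ := hin k hk
    have hs : Real.sqrt (lamMin hP.1) > 0 := Real.sqrt_pos.mpr hlamPmin
    have hxk : eNorm (x k) ≤ 1 / Real.sqrt (lamMin hP.1) := by
      have h1 : lamMin hP.1 * ∑ i, x k i ^ 2 ≤ 1 :=
        le_trans (rayleigh_bounds hn hP.1 (x k)).1 hk
      have h2 : ∑ i, x k i ^ 2 ≤ 1 / lamMin hP.1 := by
        rw [le_div_iff₀ hlamPmin]; linarith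
      have h3 : eNorm (x k) ≤ Real.sqrt (1 / lamMin hP.1) :=
        Real.sqrt_le_sqrt h2
      rwa [one_div, Real.sqrt_inv, ← one_div] at h3
    have hx' : eNorm (x (k + 1)) ≤ C' / Real.sqrt (lamMin hP.1) + ϖ := by
      rw [hx k]
      calc eNorm (Φ k *ᵥ x k + w k) ≤ eNorm (Φ k *ᵥ x k) + eNorm (w k) :=
            eNorm_add_le _ _
        _ ≤ opNorm2 (Φ k) * eNorm (x k) + ϖ := by
            gcongr
            exact mulVec_eNorm_le _ _
        _ ≤ C' * (1 / Real.sqrt (lamMin hP.1)) + ϖ :=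
            add_le_add (mul_le_mul hΦ hxk (eNorm_nonneg _) hC') le_rfl
        _ = C' / Real.sqrt (lamMin hP.1) + ϖ := by ring
    calc x (k + 1) ⬝ᵥ (P *ᵥ x (k + 1)) ≤ lamMax hP.1 * ∑ i, x (k + 1) i ^ 2 :=
          (rayleigh_bounds hn hP.1 _).2
      _ = lamMax hP.1 * eNorm (x (k + 1)) ^ 2 := by rw [eNorm_sq]
      _ ≤ μ₂ := by
          rw [hμ₂]
          exact mul_le_mul_of_nonneg_left
            (pow_le_pow_left₀ (eNorm_nonneg _) hx' 2) hlamPmax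
  -- induction
  intro k
  induction k with
  | zero => simpa using le_max_left _ _
  | succ k ih =>
    set E := Real.exp (-β * ∑ j ∈ Finset.range k, S j) with hE
    have hE' : Real.exp (-β * ∑ j ∈ Finset.range (k + 1), S j)
        = Real.exp (-β * S k) * E := by
      rw [hE, ← Real.exp_add, Finset.sum_range_succ]
      ring_nf
    by_cases hk : 1 < x k ⬝ᵥ (P *ᵥ x k)
    · have h1 := step1 k hk
      have he : Real.exp (-β * S k) ≤ 1 := by
        apply Real.exp_le_one_iff.mpr
        nlinarith [hS k]
      have hepos : 0 < Real.exp (-β * S k) := Real.exp_pos _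
      calc x (k + 1) ⬝ᵥ (P *ᵥ x (k + 1)) ≤ Real.exp (-β * S k) * (x k ⬝ᵥ (P *ᵥ x k)) := h1
        _ ≤ Real.exp (-β * S k) * max (E * (x 0 ⬝ᵥ (P *ᵥ x 0))) (max 1 μ₂) := by
            exact mul_le_mul_of_nonneg_left ih hepos.le
        _ = max (Real.exp (-β * S k) * (E * (x 0 ⬝ᵥ (P *ᵥ x 0))))
              (Real.exp (-β * S k) * max 1 μ₂) := by
            rw [mul_max_of_nonneg _ _ hepos.le]
        _ ≤ max (Real.exp (-β * ∑ j ∈ Finset.range (k + 1), S j) * (x 0 ⬝ᵥ (P *ᵥ x 0)))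
              (max 1 μ₂) := by
            apply max_le_max
            · rw [hE', mul_assoc]
            · calc Real.exp (-β * S k) * max 1 μ₂ ≤ 1 * max 1 μ₂ := by
                    exact mul_le_mul_of_nonneg_right he
                      (le_trans zero_le_one (le_max_left _ _))
                _ = max 1 μ₂ := one_mul _
    · push_neg at hk
      have h2 := step2 k hk
      exact le_trans h2 (le_trans (le_max_right 1 μ₂) (le_max_right _ _))
end
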